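/- Suppose f and u'' are both logconcave, and let (0 = s₀ < s₁ < … < s_N = 1; x₁,…,x_N) be a solution of the dual system for some N ≥ 2. Define the interleaved sequence Δ₁,…,Δ_{2N−1} by Δ_{2k−1} = s_k − s_{k−1} for k = 1,…,N and Δ_{2k} = x_{k+1} − x_k for k = 1,…,N−1. Then Δ is single-dipped: for every i with 2 ≤ i ≤ 2N−2, Δ_i ≥ Δ_{i−1} implies Δ_{i+1} ≥ Δ_i. -/

import Mathlib

/-
Every step of the claim is one fact about a positive logconcave density `g` and adjacent
intervals `[p, q]`, `[q, r]`: if `q - p ≤ m(q, r) - m(p, q)`, with `m` the conditional mean, then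
`m(q, r) - m(p, q) ≤ r - q`. When `Δᵢ` is a gap between signals it is applied to `f` and three
consecutive cutoffs, when `Δᵢ` is a cutoff width to `u''` and three consecutive signals.

Logconcavity gives `g α * g ω ≤ g β * g (α + ω - β)` for `α ≤ β ≤ ω`. By a likelihood-ratio
comparison, sliding an interval to the right by `δ` therefore moves its conditional mean by at most
`δ`; and since the reversed hazard rate `g / ∫ₐ g` decreases, `b - m(a, b)` is nondecreasing in
`b`. Sliding `[p, p + (r - q)]` onto `[q, r]` shows that the hypothesis forces `q - p ≤ r - q`;
then slide `[p, q]` onto `[q, 2q - p]` and extend it to `[q, r]`.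
-/

open MeasureTheory Set

/-- The mean of the "density" `g` conditional on the interval `(a, b)`. -/
noncomputable def condMean (g : ℝ → ℝ) (a b : ℝ) : ℝ :=
  (∫ t in a..b, t * g t) / (∫ t in a..b, g t)

/-- A strictly positive function on `[0,1]` is logconcave if its log is concave there. -/
def LogConcaveOn01 (g : ℝ → ℝ) : Prop :=
  ConcaveOn ℝ (Icc (0:ℝ) 1) fun t => Real.log (g t)

/-- The dual system: cutoffs `0 = s 0 < s 1 < … < s N = 1` and signals `x 1, …, x N`. -/
def DualSystem (g w : ℝ → ℝ) (N : ℕ) (s x : ℕ → ℝ) : Prop :=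
  s 0 = 0 ∧ s N = 1 ∧ (∀ k < N, s k < s (k + 1)) ∧
    (∀ k, 1 ≤ k → k ≤ N → x k = condMean g (s (k - 1)) (s k)) ∧
    (∀ k, 1 ≤ k → k ≤ N - 1 → s k = condMean w (x k) (x (k + 1)))

/-- The interleaved sequence `Δ`:
`Δ (2k-1) = s k - s (k-1)` (interval widths) and `Δ (2k) = x (k+1) - x k`
(distances between adjacent posterior means). -/
noncomputable def interleaved (s x : ℕ → ℝ) (i : ℕ) : ℝ :=
  if i % 2 = 1 then s ((i + 1) / 2) - s ((i + 1) / 2 - 1)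
  else x (i / 2 + 1) - x (i / 2)

theorem ConcaveOn.map_add_map_le_map_add_map {φ : ℝ → ℝ} {S : Set ℝ} (hφ : ConcaveOn ℝ S φ)
    {α β ω : ℝ} (hα : α ∈ S) (hω : ω ∈ S) (hβ : β ∈ Icc α ω) :
    φ α + φ ω ≤ φ β + φ (α + ω - β) := by
  rw [← segment_eq_Icc (hβ.1.trans hβ.2)] at hβ
  obtain ⟨a, b, ha, hb, hab, rfl⟩ := hβ
  have h₁ := hφ.2 hα hω ha hb hab
  have h₂ := hφ.2 hα hω hb ha (by rw [add_comm, hab])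
  obtain rfl : b = 1 - a := by linarith
  rw [show α + ω - (a • α + (1 - a) • ω) = (1 - a) • α + a • ω by simp only [smul_eq_mul]; ring]
  simp only [smul_eq_mul] at h₁ h₂ ⊢
  linarith

structure PosLogConcaveOn (S : Set ℝ) (g : ℝ → ℝ) : Prop where
  pos : ∀ t ∈ S, 0 < g t
  concaveOn_log : ConcaveOn ℝ S fun t => Real.log (g t)

namespace PosLogConcaveOn

variable {S : Set ℝ} {g : ℝ → ℝ}

theorem mem_of_mem_Icc (hlc : PosLogConcaveOn S g) {a b t : ℝ} (ha : a ∈ S) (hb : b ∈ S)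
    (ht : t ∈ Icc a b) : t ∈ S :=
  hlc.concaveOn_log.1.ordConnected.out ha hb ht

theorem pos_of_mem_Ioo (hlc : PosLogConcaveOn S g) {a b t : ℝ} (ha : a ∈ S) (hb : b ∈ S)
    (ht : t ∈ Ioo a b) : 0 < g t :=
  hlc.pos t (hlc.mem_of_mem_Icc ha hb (Ioo_subset_Icc_self ht))

theorem mul_le_mul {α β ω : ℝ} (hlc : PosLogConcaveOn S g) (hα : α ∈ S) (hω : ω ∈ S)
    (hβ : β ∈ Icc α ω) : g α * g ω ≤ g β * g (α + ω - β) := by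
  have hβS := hlc.mem_of_mem_Icc hα hω hβ
  have hγS := hlc.mem_of_mem_Icc hα hω (t := α + ω - β) ⟨by linarith [hβ.2], by linarith [hβ.1]⟩
  rw [← Real.log_le_log_iff (mul_pos (hlc.pos α hα) (hlc.pos ω hω))
      (mul_pos (hlc.pos β hβS) (hlc.pos _ hγS)),
    Real.log_mul (hlc.pos α hα).ne' (hlc.pos ω hω).ne',
    Real.log_mul (hlc.pos β hβS).ne' (hlc.pos _ hγS).ne']
  exact hlc.concaveOn_log.map_add_map_le_map_add_map hα hω hβ

end PosLogConcaveOn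

section CondMean

variable {g : ℝ → ℝ} {a b c : ℝ}

theorem integral_sub_mul (hg : Continuous g) :
    ∫ t in a..b, (t - c) * g t = (∫ t in a..b, t * g t) - c * ∫ t in a..b, g t := by
  simp_rw [sub_mul]
  rw [intervalIntegral.integral_sub (Continuous.intervalIntegrable (by fun_prop) _ _)
    (Continuous.intervalIntegrable (by fun_prop) _ _), intervalIntegral.integral_const_mul]

theorem le_condMean_iff (hg : Continuous g) (hI : 0 < ∫ t in a..b, g t) :
    c ≤ condMean g a b ↔ 0 ≤ ∫ t in a..b, (t - c) * g t := by
  rw [condMean, le_div_iff₀ hI, integral_sub_mul hg, sub_nonneg]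

theorem lt_condMean_iff (hg : Continuous g) (hI : 0 < ∫ t in a..b, g t) :
    c < condMean g a b ↔ 0 < ∫ t in a..b, (t - c) * g t := by
  rw [condMean, lt_div_iff₀ hI, integral_sub_mul hg, sub_pos]

theorem condMean_lt_iff (hg : Continuous g) (hI : 0 < ∫ t in a..b, g t) :
    condMean g a b < c ↔ 0 < ∫ t in a..b, (c - t) * g t := by
  rw [condMean, div_lt_iff₀ hI, ← sub_pos, ← neg_sub, ← integral_sub_mul hg,
    ← intervalIntegral.integral_neg]
  simp_rw [← neg_mul, neg_sub]

theorem integral_sub_condMean_mul (hg : Continuous g) (hI : ∫ t in a..b, g t ≠ 0) :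
    ∫ t in a..b, (t - condMean g a b) * g t = 0 := by
  rw [integral_sub_mul hg, condMean, div_mul_cancel₀ _ hI, sub_self]

theorem condMean_mem_Ioo (hg : Continuous g) (hab : a < b) (hpos : ∀ t ∈ Ioo a b, 0 < g t) :
    condMean g a b ∈ Ioo a b := by
  have hI := intervalIntegral.intervalIntegral_pos_of_pos_on (hg.intervalIntegrable a b) hpos hab
  refine ⟨(lt_condMean_iff hg hI).2 ?_, (condMean_lt_iff hg hI).2 ?_⟩ <;>
    refine intervalIntegral.intervalIntegral_pos_of_pos_on
      (Continuous.intervalIntegrable (by fun_prop) _ _) (fun t ht => ?_) hab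
  · exact mul_pos (sub_pos.2 ht.1) (hpos t ht)
  · exact mul_pos (sub_pos.2 ht.2) (hpos t ht)

theorem condMean_lt_condMean_right {b' : ℝ} (hg : Continuous g) (hab : a < b) (hbb' : b < b')
    (hpos : ∀ t ∈ Ioo a b', 0 < g t) : condMean g a b < condMean g a b' := by
  have hpos_ab : ∀ t ∈ Ioo a b, 0 < g t := fun t ht => hpos t ⟨ht.1, ht.2.trans hbb'⟩
  have hc := condMean_mem_Ioo hg hab hpos_ab
  have hI := intervalIntegral.intervalIntegral_pos_of_pos_on (hg.intervalIntegrable a b) hpos_ab hab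
  have hI' := intervalIntegral.intervalIntegral_pos_of_pos_on (hg.intervalIntegrable a b') hpos
    (hab.trans hbb')
  rw [lt_condMean_iff hg hI', ← intervalIntegral.integral_add_adjacent_intervals
    (Continuous.intervalIntegrable (by fun_prop) _ _)
    (Continuous.intervalIntegrable (by fun_prop) _ _), integral_sub_condMean_mul hg hI.ne',
    zero_add]
  refine intervalIntegral.intervalIntegral_pos_of_pos_on
    (Continuous.intervalIntegrable (by fun_prop) _ _) (fun t ht => ?_) hbb'
  exact mul_pos (by linarith [ht.1, hc.2]) (hpos t ⟨hab.trans ht.1, ht.2⟩)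

theorem condMean_comp_add_right (hg : Continuous g) {δ : ℝ}
    (hI : ∫ t in a + δ..b + δ, g t ≠ 0) :
    condMean (fun t => g (t + δ)) a b = condMean g (a + δ) (b + δ) - δ := by
  have hnum : ∫ t in a..b, t * g (t + δ) = ∫ t in a + δ..b + δ, (t - δ) * g t := by
    rw [← intervalIntegral.integral_comp_add_right]
    simp only [add_sub_cancel_right]
  rw [condMean, condMean, hnum, intervalIntegral.integral_comp_add_right g, integral_sub_mul hg,
    sub_div, mul_div_cancel_right₀ _ hI]

theorem condMean_le_condMean_of_mul_le_mul {g₁ g₂ : ℝ → ℝ} (h₁ : Continuous g₁)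
    (h₂ : Continuous g₂) (hab : a < b) (hpos₁ : ∀ t ∈ Ioo a b, 0 < g₁ t)
    (hpos₂ : ∀ t ∈ Ioo a b, 0 < g₂ t)
    (hratio : ∀ s t, a ≤ s → s ≤ t → t ≤ b → g₁ t * g₂ s ≤ g₁ s * g₂ t) :
    condMean g₁ a b ≤ condMean g₂ a b := by
  set c := condMean g₁ a b
  have hc := condMean_mem_Ioo h₁ hab hpos₁
  have hI₁ := intervalIntegral.intervalIntegral_pos_of_pos_on (h₁.intervalIntegrable a b) hpos₁ hab
  have hI₂ := intervalIntegral.intervalIntegral_pos_of_pos_on (h₂.intervalIntegrable a b) hpos₂ hab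
  -- `g₂ / g₁` is increasing, so it is positively correlated with `t - c` under `g₁`
  have hcross : ∀ t ∈ Icc a b, 0 ≤ (t - c) * (g₁ c * g₂ t - g₂ c * g₁ t) := by
    intro t ht
    rcases le_total c t with hct | htc
    · exact mul_nonneg (sub_nonneg.2 hct) (by linarith [hratio c t hc.1.le hct ht.2])
    · exact mul_nonneg_of_nonpos_of_nonpos (sub_nonpos.2 htc)
        (by linarith [hratio t c ht.1 htc hc.2.le])
  have hsplit : ∫ t in a..b, (t - c) * (g₁ c * g₂ t - g₂ c * g₁ t)
      = g₁ c * (∫ t in a..b, (t - c) * g₂ t) - g₂ c * ∫ t in a..b, (t - c) * g₁ t := by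
    rw [← intervalIntegral.integral_const_mul, ← intervalIntegral.integral_const_mul,
      ← intervalIntegral.integral_sub (Continuous.intervalIntegrable (by fun_prop) _ _)
        (Continuous.intervalIntegrable (by fun_prop) _ _)]
    congr 1 with t
    ring
  have h : 0 ≤ ∫ t in a..b, (t - c) * (g₁ c * g₂ t - g₂ c * g₁ t) :=
    intervalIntegral.integral_nonneg hab.le hcross
  rw [hsplit, integral_sub_condMean_mul h₁ hI₁.ne', mul_zero, sub_zero] at h
  exact (le_condMean_iff h₂ hI₂).2 (nonneg_of_mul_nonneg_right h (hpos₁ c hc))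

theorem integral_integral_eq {x : ℝ} (hg : Continuous g) :
    ∫ t in a..x, ∫ σ in a..t, g σ = x * (∫ t in a..x, g t) - ∫ t in a..x, t * g t := by
  have hF : ∀ v, HasDerivAt (fun w => ∫ σ in a..w, g σ) (g v) v := fun v =>
    (hg.integral_hasStrictDerivAt a v).hasDerivAt
  have hG : ∀ v, HasDerivAt (fun w => w * (∫ σ in a..w, g σ) - ∫ σ in a..w, σ * g σ)
      (∫ σ in a..v, g σ) v := fun v => by
    have hT : HasDerivAt (fun w => ∫ σ in a..w, σ * g σ) (v * g v) v :=
      ((show Continuous fun σ => σ * g σ by fun_prop).integral_hasStrictDerivAt a v).hasDerivAt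
    exact (((hasDerivAt_id' v).mul (hF v)).sub hT).congr_deriv (by ring)
  rw [intervalIntegral.integral_eq_sub_of_hasDerivAt (fun v _ => hG v)
    ((continuous_iff_continuousAt.2 fun v => (hF v).continuousAt).intervalIntegrable a x)]
  simp

theorem sub_condMean_eq {x : ℝ} (hg : Continuous g) (hI : ∫ t in a..x, g t ≠ 0) :
    x - condMean g a x = (∫ t in a..x, ∫ σ in a..t, g σ) / ∫ t in a..x, g t := by
  rw [integral_integral_eq hg, condMean, eq_div_iff hI, sub_mul, div_mul_cancel₀ _ hI]

end CondMean

namespace PosLogConcaveOn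

variable {S : Set ℝ} {g : ℝ → ℝ}

theorem condMean_add_le (hg : Continuous g) (hlc : PosLogConcaveOn S g) {a b δ : ℝ} (ha : a ∈ S)
    (hab : a < b) (hδ : 0 ≤ δ) (hbδ : b + δ ∈ S) :
    condMean g (a + δ) (b + δ) ≤ condMean g a b + δ := by
  have hpos : ∀ t ∈ Ioo a (b + δ), 0 < g t := fun t ht => hlc.pos_of_mem_Ioo ha hbδ ht
  have hI : 0 < ∫ t in a + δ..b + δ, g t :=
    intervalIntegral.intervalIntegral_pos_of_pos_on (hg.intervalIntegrable _ _)
      (fun t ht => hpos t ⟨by linarith [ht.1], ht.2⟩) (by linarith)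
  rw [← sub_le_iff_le_add, ← condMean_comp_add_right hg hI.ne']
  refine condMean_le_condMean_of_mul_le_mul (by fun_prop) hg hab
    (fun t ht => hpos _ ⟨by linarith [ht.1], by linarith [ht.2]⟩)
    (fun t ht => hpos t ⟨ht.1, by linarith [ht.2]⟩) fun s t hs hst htb => ?_
  have h := hlc.mul_le_mul (β := t) (ω := t + δ) (hlc.mem_of_mem_Icc ha hbδ ⟨hs, by linarith⟩)
    (hlc.mem_of_mem_Icc ha hbδ ⟨by linarith, by linarith⟩) ⟨hst, by linarith⟩
  rw [show s + (t + δ) - t = s + δ by ring] at h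
  linarith

theorem mul_integral_le_mul_integral (hg : Continuous g) (hlc : PosLogConcaveOn S g)
    {a x t : ℝ} (ha : a ∈ S) (ht : t ∈ S) (hax : a ≤ x) (hxt : x ≤ t) :
    g t * ∫ σ in a..x, g σ ≤ g x * ∫ σ in a..t, g σ := by
  have hmem : ∀ v ∈ Icc a t, v ∈ S := fun v hv => hlc.mem_of_mem_Icc ha ht hv
  calc g t * ∫ σ in a..x, g σ = ∫ σ in a..x, g σ * g t := by
        rw [← intervalIntegral.integral_const_mul]
        simp_rw [mul_comm]
    _ ≤ ∫ σ in a..x, g x * g (σ + (t - x)) := by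
        refine intervalIntegral.integral_mono_on hax
          (Continuous.intervalIntegrable (by fun_prop) _ _)
          (Continuous.intervalIntegrable (by fun_prop) _ _) fun σ hσ => ?_
        rw [← add_sub_assoc]
        exact hlc.mul_le_mul (hmem σ ⟨hσ.1, hσ.2.trans hxt⟩) ht ⟨hσ.2, hxt⟩
    _ = g x * ∫ σ in a + (t - x)..t, g σ := by
        rw [intervalIntegral.integral_const_mul, intervalIntegral.integral_comp_add_right g,
          add_sub_cancel]
    _ ≤ g x * ∫ σ in a..t, g σ := by
        refine mul_le_mul_of_nonneg_left ?_ (hlc.pos x (hmem x ⟨hax, hxt⟩)).le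
        refine intervalIntegral.integral_mono_interval (by linarith) (by linarith) le_rfl ?_
          (hg.intervalIntegrable a t)
        exact ae_restrict_of_forall_mem measurableSet_Ioc fun v hv =>
          (hlc.pos v (hmem v (Ioc_subset_Icc_self hv))).le

theorem sub_condMean_le_sub_condMean (hg : Continuous g) (hlc : PosLogConcaveOn S g)
    {a x y : ℝ} (ha : a ∈ S) (hy : y ∈ S) (hax : a < x) (hxy : x ≤ y) :
    x - condMean g a x ≤ y - condMean g a y := by
  have hmem : ∀ v ∈ Icc a y, v ∈ S := fun v hv => hlc.mem_of_mem_Icc ha hy hv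
  set F : ℝ → ℝ := fun v => ∫ σ in a..v, g σ with hF
  set B : ℝ → ℝ := fun v => ∫ t in a..v, F t with hB
  have hFc : Continuous F := continuous_iff_continuousAt.2 fun v =>
    (hg.integral_hasStrictDerivAt a v).hasDerivAt.continuousAt
  have hpos : ∀ {b}, a < b → b ≤ y → 0 < F b := fun hab hby =>
    intervalIntegral.intervalIntegral_pos_of_pos_on (hg.intervalIntegrable _ _)
      (fun t ht => hlc.pos_of_mem_Ioo ha hy ⟨ht.1, ht.2.trans_le hby⟩) hab
  have hFx : 0 < F x := hpos hax hxy
  have hFy : 0 < F y := hpos (hax.trans_le hxy) le_rfl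
  have hgx : 0 < g x := hlc.pos x (hmem x ⟨hax.le, hxy⟩)
  rw [sub_condMean_eq hg hFx.ne', sub_condMean_eq hg hFy.ne', div_le_div_iff₀ hFx hFy]
  change B x * F y ≤ B y * F x
  have hleft : g x * B x ≤ F x * F x := by
    rw [hB, ← intervalIntegral.integral_const_mul, ← intervalIntegral.integral_mul_const]
    refine intervalIntegral.integral_mono_on hax.le
      (Continuous.intervalIntegrable (by fun_prop) _ _)
      (Continuous.intervalIntegrable (by fun_prop) _ _) fun s hs => ?_
    exact hlc.mul_integral_le_mul_integral hg ha (hmem x ⟨hax.le, hxy⟩) hs.1 hs.2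
  have hright : F x * (F y - F x) ≤ g x * (B y - B x) := by
    rw [hB, hF, intervalIntegral.integral_interval_sub_left (hg.intervalIntegrable _ _)
      (hg.intervalIntegrable _ _), intervalIntegral.integral_interval_sub_left
      (hFc.intervalIntegrable _ _) (hFc.intervalIntegrable _ _),
      ← intervalIntegral.integral_const_mul, ← intervalIntegral.integral_const_mul]
    refine intervalIntegral.integral_mono_on hxy
      (Continuous.intervalIntegrable (by fun_prop) _ _)
      (Continuous.intervalIntegrable (by fun_prop) _ _) fun t ht => ?_
    rw [mul_comm]
    exact hlc.mul_integral_le_mul_integral hg ha (hmem t ⟨hax.le.trans ht.1, ht.2⟩) hax.le ht.1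
  have hFxy : 0 ≤ F y - F x := sub_nonneg.2 <|
    intervalIntegral.integral_mono_interval le_rfl hax.le hxy
      (ae_restrict_of_forall_mem measurableSet_Ioc fun v hv =>
        (hlc.pos v (hmem v (Ioc_subset_Icc_self hv))).le) (hg.intervalIntegrable a y)
  -- `g x * (B x * F y - B y * F x) = g x * B x * (F y - F x) - F x * (g x * (B y - B x))`
  nlinarith [mul_le_mul_of_nonneg_right hleft hFxy, mul_le_mul_of_nonneg_left hright hFx.le]

theorem condMean_sub_condMean_le (hg : Continuous g) (hlc : PosLogConcaveOn S g) {p q r : ℝ}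
    (hp : p ∈ S) (hr : r ∈ S) (hpq : p < q) (hqr : q < r)
    (hle : q - p ≤ condMean g q r - condMean g p q) :
    condMean g q r - condMean g p q ≤ r - q := by
  have hq : q ∈ S := hlc.mem_of_mem_Icc hp hr ⟨hpq.le, hqr.le⟩
  -- sliding `[p, p + (r - q)]` onto `[q, r]` would otherwise contradict `hle`
  have hwidth : q - p ≤ r - q := by
    by_contra! hlt
    have hslide := hlc.condMean_add_le hg hp (b := p + (r - q)) (δ := q - p) (by linarith)
      (by linarith) (by rwa [show p + (r - q) + (q - p) = r by ring])
    rw [add_sub_cancel, show p + (r - q) + (q - p) = r by ring] at hslide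
    have hshort := condMean_lt_condMean_right hg (b := p + (r - q)) (by linarith) (by linarith)
      fun t ht => hlc.pos_of_mem_Ioo hp hq ht
    linarith
  have hslide := hlc.condMean_add_le hg hp hpq (δ := q - p) (by linarith)
    (hlc.mem_of_mem_Icc hq hr ⟨by linarith, by linarith⟩)
  rw [add_sub_cancel] at hslide
  have hmono := hlc.sub_condMean_le_sub_condMean hg hq hr (x := q + (q - p)) (by linarith)
    (by linarith)
  linarith

end PosLogConcaveOn

theorem interleaved_two_mul_add_one (s x : ℕ → ℝ) (k : ℕ) :
    interleaved s x (2 * k + 1) = s (k + 1) - s k := by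
  rw [interleaved, if_pos (by omega), show (2 * k + 1 + 1) / 2 = k + 1 by omega,
    Nat.add_sub_cancel]

theorem interleaved_two_mul_add_two (s x : ℕ → ℝ) (k : ℕ) :
    interleaved s x (2 * k + 2) = x (k + 2) - x (k + 1) := by
  rw [interleaved, if_neg (by omega), show (2 * k + 2) / 2 = k + 1 by omega]

namespace DualSystem

variable {g w : ℝ → ℝ} {N : ℕ} {s x : ℕ → ℝ}

theorem s_mem_Icc (hds : DualSystem g w N s x) {k : ℕ} (hk : k ≤ N) : s k ∈ Icc 0 1 := by
  obtain ⟨hs0, hsN, hmono, -, -⟩ := hds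
  have hmono' := (strictMonoOn_Iic_of_lt_succ hmono).monotoneOn
  exact ⟨hs0 ▸ hmono' (Nat.zero_le _) hk (Nat.zero_le _),
    hsN ▸ hmono' hk (le_refl N) hk⟩

theorem x_succ_eq (hds : DualSystem g w N s x) {k : ℕ} (hk : k < N) :
    x (k + 1) = condMean g (s k) (s (k + 1)) := by
  rw [hds.2.2.2.1 (k + 1) (by omega) hk, Nat.add_sub_cancel]

theorem x_mem_Ioo (hds : DualSystem g w N s x) (hg : Continuous g)
    (hpos : ∀ t ∈ Icc (0 : ℝ) 1, 0 < g t) {k : ℕ} (hk : k < N) :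
    x (k + 1) ∈ Ioo (s k) (s (k + 1)) := by
  rw [hds.x_succ_eq hk]
  refine condMean_mem_Ioo hg (hds.2.2.1 k hk) fun t ht => hpos t ?_
  exact ⟨(hds.s_mem_Icc hk.le).1.trans ht.1.le, ht.2.le.trans (hds.s_mem_Icc hk).2⟩

theorem s_succ_eq (hds : DualSystem g w N s x) {k : ℕ} (hk : k + 2 ≤ N) :
    s (k + 1) = condMean w (x (k + 1)) (x (k + 2)) :=
  hds.2.2.2.2 (k + 1) (by omega) (by omega)

theorem signal_gap_le_cutoff_gap (hds : DualSystem g w N s x) (hg : Continuous g)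
    (hlc : PosLogConcaveOn (Icc 0 1) g) {k : ℕ} (hk : k + 2 ≤ N)
    (hle : s (k + 1) - s k ≤ x (k + 2) - x (k + 1)) :
    x (k + 2) - x (k + 1) ≤ s (k + 2) - s (k + 1) := by
  have hx₁ : x (k + 1) = condMean g (s k) (s (k + 1)) := hds.x_succ_eq (by omega)
  have hx₂ : x (k + 2) = condMean g (s (k + 1)) (s (k + 2)) := hds.x_succ_eq (by omega)
  rw [hx₁, hx₂] at hle ⊢
  exact hlc.condMean_sub_condMean_le hg (hds.s_mem_Icc (by omega)) (hds.s_mem_Icc hk)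
    (hds.2.2.1 k (by omega)) (hds.2.2.1 (k + 1) (by omega)) hle

theorem cutoff_gap_le_signal_gap (hds : DualSystem g w N s x) (hg : Continuous g)
    (hg_pos : ∀ t ∈ Icc (0 : ℝ) 1, 0 < g t) (hw : Continuous w)
    (hlc : PosLogConcaveOn (Icc 0 1) w) {k : ℕ} (hk : k + 3 ≤ N)
    (hle : x (k + 2) - x (k + 1) ≤ s (k + 2) - s (k + 1)) :
    s (k + 2) - s (k + 1) ≤ x (k + 3) - x (k + 2) := by
  have hs₁ : s (k + 1) = condMean w (x (k + 1)) (x (k + 2)) := hds.s_succ_eq (by omega)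
  have hs₂ : s (k + 2) = condMean w (x (k + 2)) (x (k + 3)) := hds.s_succ_eq (by omega)
  have hx₁ := hds.x_mem_Ioo hg hg_pos (k := k) (by omega)
  have hx₂ := hds.x_mem_Ioo hg hg_pos (k := k + 1) (by omega)
  have hx₃ := hds.x_mem_Ioo hg hg_pos (k := k + 2) (by omega)
  rw [hs₁, hs₂] at hle ⊢
  exact hlc.condMean_sub_condMean_le hw
    ⟨(hds.s_mem_Icc (by omega)).1.trans hx₁.1.le, hx₁.2.le.trans (hds.s_mem_Icc (by omega)).2⟩
    ⟨(hds.s_mem_Icc (by omega)).1.trans hx₃.1.le, hx₃.2.le.trans (hds.s_mem_Icc hk).2⟩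
    (hx₁.2.trans hx₂.1) (hx₂.2.trans hx₃.1) hle

end DualSystem

theorem stmt_2_general (f u : ℝ → ℝ) (N : ℕ)
    (hf_cont : Continuous f) (hf_pos : ∀ t ∈ Icc (0:ℝ) 1, 0 < f t)
    (hu : ContDiff ℝ 2 u)
    (hu'' : ∀ t ∈ Icc (0:ℝ) 1, 0 < deriv (deriv u) t)
    (hf_lc : LogConcaveOn01 f) (hu_lc : LogConcaveOn01 (deriv (deriv u)))
    (s x : ℕ → ℝ) (hds : DualSystem f (deriv (deriv u)) N s x) :
    ∀ i, 2 ≤ i → i ≤ 2 * N - 2 →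
      interleaved s x (i - 1) ≤ interleaved s x i →
      interleaved s x i ≤ interleaved s x (i + 1) := by
  have hu''_cont : Continuous (deriv (deriv u)) := (hu.iterate_deriv' 0 2).continuous
  intro i hi₂ hiN
  obtain ⟨k, rfl | rfl⟩ : ∃ k, i = 2 * k + 2 ∨ i = 2 * k + 3 := ⟨(i - 2) / 2, by omega⟩
  · change interleaved s x (2 * k + 1) ≤ _ → _ ≤ interleaved s x (2 * (k + 1) + 1)
    rw [interleaved_two_mul_add_one, interleaved_two_mul_add_one, interleaved_two_mul_add_two]
    exact hds.signal_gap_le_cutoff_gap hf_cont ⟨hf_pos, hf_lc⟩ (k := k) (by omega)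
  · change interleaved s x (2 * k + 2) ≤ interleaved s x (2 * (k + 1) + 1) →
      interleaved s x (2 * (k + 1) + 1) ≤ interleaved s x (2 * (k + 1) + 2)
    rw [interleaved_two_mul_add_one, interleaved_two_mul_add_two, interleaved_two_mul_add_two]
    exact hds.cutoff_gap_le_signal_gap hf_cont hf_pos hu''_cont ⟨hu'', hu_lc⟩ (k := k) (by omega)

/-- single-dipped interleaved widths in a logconcave environment. -/
theorem stmt_2 (f u : ℝ → ℝ) (N : ℕ) (hN : 2 ≤ N)
    (hf_cont : Continuous f) (hf_pos : ∀ t ∈ Icc (0:ℝ) 1, 0 < f t)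
    (hf_prob : (∫ t in (0:ℝ)..1, f t) = 1)
    (hu : ContDiff ℝ 2 u)
    (hu'' : ∀ t ∈ Icc (0:ℝ) 1, 0 < deriv (deriv u) t)
    (hf_lc : LogConcaveOn01 f) (hu_lc : LogConcaveOn01 (deriv (deriv u)))
    (s x : ℕ → ℝ) (hds : DualSystem f (deriv (deriv u)) N s x) :
    ∀ i, 2 ≤ i → i ≤ 2 * N - 2 →
      interleaved s x (i - 1) ≤ interleaved s x i →
      interleaved s x i ≤ interleaved s x (i + 1) :=
  stmt_2_general f u N hf_cont hf_pos hu hu'' hf_lc hu_lc s x hds
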